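/- arXiv:2004.04638 — 6 statements merged into one kernel-verified Lean document; each statement's English description precedes it below -/
import Mathlib

section
/- If G is a connected graph, then for every vertex u of G, the set V(Ḡ) ∪ {u} is a hull set of the complementary prism GḠ; that is, the geodesic convex hull of V(Ḡ) ∪ {u} in GḠ equals V(GḠ). -/
open SimpleGraph

/-- Adjacency of the complementary prism: copies of `G` and `Gᶜ` joined by a perfect matching. -/
def prismAdj {V : Type*} (G : SimpleGraph V) : V ⊕ V → V ⊕ V → Prop
  | Sum.inl a, Sum.inl b => G.Adj a b
  | Sum.inr a, Sum.inr b => Gᶜ.Adj a b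
  | Sum.inl a, Sum.inr b => a = b
  | Sum.inr a, Sum.inl b => a = b

/-- The complementary prism `G G̅` of a graph `G`. -/
def compPrism {V : Type*} (G : SimpleGraph V) : SimpleGraph (V ⊕ V) where
  Adj := prismAdj G
  symm := by
    constructor
    rintro (a | a) (b | b) h
    · exact h.symm
    · exact h.symm
    · exact h.symm
    · exact h.symm
  loopless := by
    constructor
    rintro (a | a) h
    · exact G.loopless.irrefl a h
    · exact Gᶜ.loopless.irrefl a h

/-- `w` lies on some shortest `u,v`-path (geodesic) of `H`. -/
def inInterval {V : Type*} (H : SimpleGraph V) (u v w : V) : Prop :=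
  ∃ p : H.Walk u v, p.IsPath ∧ p.length = H.dist u v ∧ w ∈ p.support

/-- A set of vertices is geodesically convex. -/
def IsGeoConvex {V : Type*} (H : SimpleGraph V) (S : Set V) : Prop :=
  ∀ u ∈ S, ∀ v ∈ S, ∀ w, inInterval H u v w → w ∈ S

/-- The geodesic convex hull: the smallest convex set containing `S`. -/
def geoHull {V : Type*} (H : SimpleGraph V) (S : Set V) : Set V :=
  ⋂₀ {C | IsGeoConvex H C ∧ S ⊆ C}

/-- The convexity number: maximum cardinality of a proper convex set. -/
noncomputable def convexityNumber {V : Type*} (H : SimpleGraph V) : ℕ :=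
  sSup {n | ∃ S : Set V, IsGeoConvex H S ∧ S ≠ Set.univ ∧ S.ncard = n}

/-- The diameter of a graph. -/
noncomputable def graphDiam {V : Type*} (H : SimpleGraph V) : ℕ :=
  sSup {d | ∃ u v : V, H.dist u v = d}

/-- The eccentricity of a vertex. -/
noncomputable def graphEcc {V : Type*} (H : SimpleGraph V) (u : V) : ℕ :=
  sSup {d | ∃ v : V, H.dist u v = d}

/-- The degree of a vertex. -/
noncomputable def vdeg {V : Type*} (H : SimpleGraph V) (v : V) : ℕ :=
  (H.neighborSet v).ncard

/-- The maximum degree. -/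
noncomputable def maxDeg {V : Type*} (H : SimpleGraph V) : ℕ :=
  sSup {d | ∃ v : V, vdeg H v = d}

/-- The number of pendant neighbours of a vertex. -/
noncomputable def pendCount {V : Type*} (H : SimpleGraph V) (w : V) : ℕ :=
  {v ∈ H.neighborSet w | vdeg H v = 1}.ncard

/-!
The hull contains every `inl a` with `a` reachable from `u`. Indeed, if `inl a` is in
a convex set `C ⊇ range inr` and `a ~ b` in `G`, then `inl a – inl b – inr b` is a geodesic, because
`inl a` and `inr b` are distinct and non-adjacent in the prism; so `inl b ∈ C`.
-/

section

variable {V : Type*}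

theorem IsGeoConvex.mem_of_adj_of_adj {H : SimpleGraph V} {C : Set V} (hC : IsGeoConvex H C)
    {x y z : V} (hx : x ∈ C) (hz : z ∈ C) (hxy : H.Adj x y) (hyz : H.Adj y z) (hxz : x ≠ z)
    (hnxz : ¬ H.Adj x z) : y ∈ C := by
  let p : H.Walk x z := .cons hxy (.cons hyz .nil)
  have hdist : p.length = H.dist x z := by
    have hle : H.dist x z ≤ 2 := dist_le p
    have hne0 : H.dist x z ≠ 0 := fun h => hxz ((Reachable.dist_eq_zero_iff ⟨p⟩).mp h)
    have hne1 : H.dist x z ≠ 1 := fun h => hnxz (dist_eq_one_iff_adj.mp h)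
    simp only [p, Walk.length_cons, Walk.length_nil]
    omega
  exact hC x hx z hz y ⟨p, p.isPath_of_length_eq_dist hdist, hdist, by simp [p]⟩

theorem IsGeoConvex.inl_mem_compPrism_of_reachable {G : SimpleGraph V} {C : Set (V ⊕ V)}
    (hC : IsGeoConvex (compPrism G) C) (hinr : Set.range Sum.inr ⊆ C) {a b : V}
    (hab : G.Reachable a b) (ha : Sum.inl a ∈ C) : Sum.inl b ∈ C := by
  obtain ⟨w⟩ := hab
  induction w with
  | nil => exact ha
  | @cons a c b hac _ ih =>
    exact ih (hC.mem_of_adj_of_adj ha (hinr ⟨c, rfl⟩) hac rfl Sum.inl_ne_inr hac.ne)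

end

theorem stmt0_general {V : Type*} (G : SimpleGraph V) (hG : G.Connected) (u : V) :
    geoHull (compPrism G) (Set.range Sum.inr ∪ {Sum.inl u}) = Set.univ := by
  refine Set.eq_univ_of_forall fun x C ⟨hC, hsub⟩ => ?_
  have hinr : Set.range Sum.inr ⊆ C := fun y hy => hsub (Or.inl hy)
  cases x with
  | inl v => exact hC.inl_mem_compPrism_of_reachable hinr (hG.preconnected u v) (hsub (Or.inr rfl))
  | inr v => exact hinr ⟨v, rfl⟩

theorem stmt0 {V : Type*} [Fintype V] (G : SimpleGraph V) (hG : G.Connected) (u : V) :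
    geoHull (compPrism G) (Set.range Sum.inr ∪ {Sum.inl u}) = Set.univ :=
  stmt0_general G hG u
end

section
/- Let G be a graph, S a subset of V(GḠ), and v₁, v₂, ..., v_k a path in G with k ≥ 2. If {v₁, v̄₂, ..., v̄_k} is contained in the convex hull of S in GḠ, then v_k belongs to the convex hull of S in GḠ. -/
open SimpleGraph

section Geodesic

variable {V : Type*} {H : SimpleGraph V}

lemma dist_eq_two_of_adj_of_adj {u v x : V} (hux : H.Adj u x) (hxv : H.Adj x v)
    (huv : ¬ H.Adj u v) (hne : u ≠ v) : H.dist u v = 2 := by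
  have hedist : H.edist u v = 2 := H.edist_eq_two_iff.mpr ⟨hne, huv, x, hux, hxv.symm⟩
  simp [SimpleGraph.dist, hedist]

lemma inInterval_of_adj_of_adj {u v x : V} (hux : H.Adj u x) (hxv : H.Adj x v)
    (huv : ¬ H.Adj u v) (hne : u ≠ v) : inInterval H u v x :=
  ⟨.cons hux (.cons hxv .nil), by simp [Walk.isPath_def, hux.ne, hxv.ne, hne],
    (dist_eq_two_of_adj_of_adj hux hxv huv hne).symm, by simp⟩

lemma IsGeoConvex.mem_of_adj_of_adj_s1 {C : Set V} (hC : IsGeoConvex H C) {u v x : V}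
    (hu : u ∈ C) (hv : v ∈ C) (hux : H.Adj u x) (hxv : H.Adj x v)
    (huv : ¬ H.Adj u v) (hne : u ≠ v) : x ∈ C :=
  hC u hu v hv x (inInterval_of_adj_of_adj hux hxv huv hne)

lemma isGeoConvex_geoHull (S : Set V) : IsGeoConvex H (geoHull H S) :=
  fun u hu v hv w hw C hC => hC.1 u (hu C hC) v (hv C hC) w hw

end Geodesic

section ComplementaryPrism

variable {V : Type*} {G : SimpleGraph V}

@[simp]
lemma compPrism_adj_inl_inl {a b : V} : (compPrism G).Adj (.inl a) (.inl b) ↔ G.Adj a b :=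
  Iff.rfl

@[simp]
lemma compPrism_adj_inl_inr {a b : V} : (compPrism G).Adj (.inl a) (.inr b) ↔ a = b :=
  Iff.rfl

/-- For an edge `ab` of `G`, the path `a, b, b̄` is a geodesic of `G G̅`. -/
lemma IsGeoConvex.inl_mem_of_adj {C : Set (V ⊕ V)} (hC : IsGeoConvex (compPrism G) C)
    {a b : V} (hab : G.Adj a b) (ha : .inl a ∈ C) (hb : .inr b ∈ C) : .inl b ∈ C :=
  hC.mem_of_adj_of_adj_s1 ha hb (by simpa using hab) (by simp) (by simpa using hab.ne)
    (by simp)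

end ComplementaryPrism

theorem stmt1_general {V : Type*} (G : SimpleGraph V) (S : Set (V ⊕ V))
    (k : ℕ) (p : ℕ → V)
    (hadj : ∀ i, i + 1 < k → G.Adj (p i) (p (i + 1)))
    (h0 : Sum.inl (p 0) ∈ geoHull (compPrism G) S)
    (hrest : ∀ i, 1 ≤ i → i < k → Sum.inr (p i) ∈ geoHull (compPrism G) S) :
    Sum.inl (p (k - 1)) ∈ geoHull (compPrism G) S := by
  suffices h : ∀ i ≤ k - 1, Sum.inl (p i) ∈ geoHull (compPrism G) S from h (k - 1) le_rfl
  intro i hi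
  induction i with
  | zero => exact h0
  | succ i ih =>
    exact (isGeoConvex_geoHull S).inl_mem_of_adj (hadj i (by omega)) (ih (by omega))
      (hrest (i + 1) (by omega) (by omega))

theorem stmt1 {V : Type*} [Fintype V] (G : SimpleGraph V) (S : Set (V ⊕ V))
    (k : ℕ) (hk : 2 ≤ k) (p : ℕ → V)
    (hadj : ∀ i, i + 1 < k → G.Adj (p i) (p (i + 1)))
    (hinj : ∀ i j, i < k → j < k → p i = p j → i = j)
    (h0 : Sum.inl (p 0) ∈ geoHull (compPrism G) S)
    (hrest : ∀ i, 1 ≤ i → i < k → Sum.inr (p i) ∈ geoHull (compPrism G) S) :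
    Sum.inl (p (k - 1)) ∈ geoHull (compPrism G) S :=
  stmt1_general G S k p hadj h0 hrest
end

section
/- Let T be a tree with diameter 5, and let u, v, w be three vertices of T such that v is adjacent to both u and w. Then V(T̄) is contained in the convex hull of {ū, v̄, w̄} in the complementary prism TT̄. -/
open SimpleGraph

/-!
If `ā, b̄` lie in a convex set `C` of `TT̄` and `ab` is an edge of `T`, then `C` contains `x̄` for
every `x` at distance at least two from both `a` and `b`: `ā, b̄` are non-adjacent in `T̄`, so
`ā x̄ b̄` is a geodesic. The edges `uv, vw` give every vertex not adjacent to `v` in this way, and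
the neighbours of `v` are then reached through edges of `T` two and three steps away from them,
which exist because a tree of diameter `5` has radius `3`.
-/

namespace SimpleGraph

variable {V : Type*} {G : SimpleGraph V}

lemma IsAcyclic.commonNeighbors_subsingleton (hG : G.IsAcyclic) {a b : V} (hab : a ≠ b) :
    (G.commonNeighbors a b).Subsingleton := by
  intro m hm m' hm'
  rw [mem_commonNeighbors] at hm hm'
  have hpaths := (hG.subsingleton_path a b).elim
    ⟨.cons hm.1 (.cons hm.2.symm .nil), by simp [hm.1.ne, hm.2.ne', hab]⟩
    ⟨.cons hm'.1 (.cons hm'.2.symm .nil), by simp [hm'.1.ne, hm'.2.ne', hab]⟩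
  simpa using congrArg (fun r : G.Path a b => r.val.support) hpaths

lemma compl_adj_of_one_lt_dist {a b : V} (h : 1 < G.dist a b) : Gᶜ.Adj a b := by
  refine (compl_adj G a b).mpr ⟨fun hab => ?_, fun hab => ?_⟩
  · simp [hab] at h
  · simp [dist_eq_one_iff_adj.mpr hab] at h

lemma Walk.dist_getVert_of_length_eq_dist {u v : V} {p : G.Walk u v}
    (hp : p.length = G.dist u v) {n : ℕ} (hn : n ≤ p.length) : G.dist u (p.getVert n) = n := by
  rw [← length_eq_dist_of_subwalk hp (p.isSubwalk_take n), Walk.take_length]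
  omega

lemma exists_adj_adj_adj_of_three_le_dist {x z : V} (h : 3 ≤ G.dist x z) :
    ∃ a b c, G.Adj x a ∧ G.Adj a b ∧ G.Adj b c ∧ G.dist x b = 2 ∧ G.dist x c = 3 := by
  obtain ⟨p, hp⟩ := exists_walk_of_dist_ne_zero (by omega : G.dist x z ≠ 0)
  refine ⟨p.getVert 1, p.getVert 2, p.getVert 3, ?_, p.adj_getVert_succ (by omega),
    p.adj_getVert_succ (by omega), p.dist_getVert_of_length_eq_dist hp (by omega),
    p.dist_getVert_of_length_eq_dist hp (by omega)⟩
  simpa using p.adj_getVert_succ (i := 0) (by omega)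

lemma Connected.exists_graphDiam_le_two_mul_dist (hG : G.Connected) (x : V) :
    ∃ z, graphDiam G ≤ 2 * G.dist x z := by
  set D := {d | ∃ u v : V, G.dist u v = d}
  by_cases hbdd : BddAbove D
  · obtain ⟨a, b, hab⟩ : sSup D ∈ D := Nat.sSup_mem ⟨_, x, x, rfl⟩ hbdd
    have htri := hG.dist_triangle (u := a) (v := x) (w := b)
    have hcomm : G.dist a x = G.dist x a := dist_comm
    rcases le_total (G.dist x a) (G.dist x b) with h | h
    · exact ⟨b, by change sSup D ≤ _; omega⟩
    · exact ⟨a, by change sSup D ≤ _; omega⟩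
  · exact ⟨x, by simp [graphDiam, D, Nat.sSup_of_not_bddAbove hbdd]⟩

end SimpleGraph

section ComplementaryPrism

variable {V : Type*} {T : SimpleGraph V} {C : Set (V ⊕ V)}

lemma IsGeoConvex.inr_mem_of_adj (hC : IsGeoConvex (compPrism T) C) {a b x : V}
    (ha : Sum.inr a ∈ C) (hb : Sum.inr b ∈ C) (hab : T.Adj a b)
    (hxa : 1 < T.dist x a) (hxb : 1 < T.dist x b) : Sum.inr x ∈ C := by
  have hax : (compPrism T).Adj (Sum.inr a) (Sum.inr x) := (compl_adj_of_one_lt_dist hxa).symm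
  have hxb : (compPrism T).Adj (Sum.inr x) (Sum.inr b) := compl_adj_of_one_lt_dist hxb
  let p : (compPrism T).Walk (Sum.inr a) (Sum.inr b) := .cons hax (.cons hxb .nil)
  have hdist : (compPrism T).dist (Sum.inr a) (Sum.inr b) = p.length := by
    refine le_antisymm (dist_le p) ?_
    have hnadj : ¬ Tᶜ.Adj a b := fun h => h.2 hab
    exact Reachable.one_lt_dist_of_ne_of_not_adj ⟨p⟩ (by simp [hab.ne]) hnadj
  exact hC _ ha _ hb _ ⟨p, p.isPath_of_length_eq_dist hdist.symm, hdist.symm, by simp [p]⟩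

/-- A vertex `y ∉ N(v)` misses one of the edges `uv`, `vw` entirely: a tree has no `4`-cycle
`u v w y`. -/
lemma IsGeoConvex.inr_mem_of_dist_ne_one (hT : T.IsTree) (hC : IsGeoConvex (compPrism T) C)
    {u v w : V} (hu : Sum.inr u ∈ C) (hv : Sum.inr v ∈ C) (hw : Sum.inr w ∈ C)
    (hvu : T.Adj v u) (hvw : T.Adj v w) (huw : u ≠ w) {y : V} (hy : T.dist v y ≠ 1) :
    Sum.inr y ∈ C := by
  rcases eq_or_ne y v with rfl | hyv
  · exact hv
  have hvy : ¬ T.Adj v y := fun h => hy (dist_eq_one_iff_adj.mpr h)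
  have one_lt_dist_of_adj {a : V} (hva : T.Adj v a) (hya : ¬ T.Adj y a) : 1 < T.dist y a :=
    hT.connected.one_lt_dist_of_ne_of_not_adj (by rintro rfl; exact hvy hva) hya
  have hyv' : 1 < T.dist y v :=
    hT.connected.one_lt_dist_of_ne_of_not_adj hyv fun h => hvy h.symm
  by_cases hyu : T.Adj y u
  · have hyw : ¬ T.Adj y w := fun hyw => hyv <|
      hT.isAcyclic.commonNeighbors_subsingleton huw ⟨hyu.symm, hyw.symm⟩ ⟨hvu.symm, hvw.symm⟩
    exact hC.inr_mem_of_adj hv hw hvw hyv' (one_lt_dist_of_adj hvw hyw)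
  · exact hC.inr_mem_of_adj hv hu hvu hyv' (one_lt_dist_of_adj hvu hyu)

/-- Every neighbour of `v` but `p₁` is handled by the edge `p₂p₃` of a geodesic `v p₁ p₂ p₃`,
and `p₁` by an edge two and three steps away from `p₁` itself. -/
lemma IsGeoConvex.range_inr_subset (hT : T.IsTree) (hC : IsGeoConvex (compPrism T) C)
    (hfar : ∀ x, ∃ z, 3 ≤ T.dist x z) {u v w : V} (hu : Sum.inr u ∈ C) (hv : Sum.inr v ∈ C)
    (hw : Sum.inr w ∈ C) (hvu : T.Adj v u) (hvw : T.Adj v w) (huw : u ≠ w) :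
    Set.range Sum.inr ⊆ C := by
  have hconn := hT.connected
  have hnonadj {y : V} : T.dist v y ≠ 1 → Sum.inr y ∈ C :=
    hC.inr_mem_of_dist_ne_one hT hu hv hw hvu hvw huw
  obtain ⟨p₁, p₂, p₃, hvp₁, hp₁₂, hp₂₃, hd₂, hd₃⟩ :=
    exists_adj_adj_adj_of_three_le_dist (hfar v).choose_spec
  have hadj {y : V} (hvy : T.Adj v y) (hyp₁ : y ≠ p₁) : Sum.inr y ∈ C := by
    have hvp₂ : v ≠ p₂ := by rintro rfl; simp at hd₂
    have hyp₂ : ¬ T.Adj y p₂ := fun h => hyp₁ <|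
      hT.isAcyclic.commonNeighbors_subsingleton hvp₂ ⟨hvy, h.symm⟩ ⟨hvp₁, hp₁₂.symm⟩
    have hvy' : T.dist v y = 1 := dist_eq_one_iff_adj.mpr hvy
    have htri₃ := hconn.dist_triangle (u := v) (v := y) (w := p₃)
    exact hC.inr_mem_of_adj (hnonadj (by omega)) (hnonadj (by omega)) hp₂₃
      (hconn.one_lt_dist_of_ne_of_not_adj (by rintro rfl; omega) hyp₂) (by omega)
  rintro _ ⟨x, rfl⟩
  rcases ne_or_eq (T.dist v x) 1 with hvx | hvx
  · exact hnonadj hvx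
  rcases ne_or_eq x p₁ with hxp₁ | rfl
  · exact hadj (dist_eq_one_iff_adj.mp hvx) hxp₁
  obtain ⟨q₁, q₂, q₃, -, -, hq₂₃, he₂, he₃⟩ :=
    exists_adj_adj_adj_of_three_le_dist (hfar x).choose_spec
  have hxv : T.dist x v = 1 := dist_comm.trans hvx
  have htri := hconn.dist_triangle (u := x) (v := v) (w := q₃)
  have hq₂ : Sum.inr q₂ ∈ C := by
    rcases ne_or_eq (T.dist v q₂) 1 with hvq₂ | hvq₂
    · exact hnonadj hvq₂
    · exact hadj (dist_eq_one_iff_adj.mp hvq₂) (by rintro rfl; simp at he₂)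
  exact hC.inr_mem_of_adj hq₂ (hnonadj (by omega)) hq₂₃ (by omega) (by omega)

end ComplementaryPrism

theorem stmt5_general {V : Type*} (T : SimpleGraph V) (hT : T.IsTree)
    (hd : graphDiam T = 5) (u v w : V) (hvu : T.Adj v u) (hvw : T.Adj v w)
    (hne : u ≠ w) :
    Set.range Sum.inr ⊆ geoHull (compPrism T) {Sum.inr u, Sum.inr v, Sum.inr w} := by
  have hfar (x : V) : ∃ z, 3 ≤ T.dist x z := by
    obtain ⟨z, hz⟩ := hT.connected.exists_graphDiam_le_two_mul_dist x
    exact ⟨z, by omega⟩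
  exact Set.subset_sInter fun C ⟨hC, hsub⟩ =>
    hC.range_inr_subset hT hfar (hsub (by simp)) (hsub (by simp)) (hsub (by simp)) hvu hvw hne

theorem stmt5 {V : Type*} [Fintype V] (T : SimpleGraph V) (hT : T.IsTree)
    (hd : graphDiam T = 5) (u v w : V) (hvu : T.Adj v u) (hvw : T.Adj v w)
    (hne : u ≠ w) :
    Set.range Sum.inr ⊆ geoHull (compPrism T) {Sum.inr u, Sum.inr v, Sum.inr w} :=
  stmt5_general T hT hd u v w hvu hvw hne
end

section
/- If T is a tree with diameter 2 (a star with at least 3 vertices), then the convexity number of the complementary prism TT̄ equals 2·n(T) − 1. -/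
/-! A tree of diameter two is a star with a centre `c` adjacent to every other vertex, so `c` is
isolated in the complement and its copy in `T̄` is a pendant vertex of the complementary prism.
A pendant vertex is never an inner vertex of a path, so all the other `2n - 1` vertices form a
convex set, and a proper subset cannot be larger. -/

open SimpleGraph

namespace SimpleGraph

variable {V : Type*} {G : SimpleGraph V}

theorem graphDiam_eq_diam [Finite V] (hG : G.Connected) : graphDiam G = G.diam := by
  have : Nonempty V := hG.nonempty
  have hediam : G.ediam ≠ ⊤ := connected_iff_ediam_ne_top.mp hG
  refine IsGreatest.csSup_eq ⟨G.exists_dist_eq_diam, ?_⟩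
  rintro d ⟨u, v, rfl⟩
  exact dist_le_diam hediam

theorem IsTree.exists_forall_adj_of_diam_eq_two (hG : G.IsTree) (hd : G.diam = 2) :
    ∃ c, ∀ w, w ≠ c → G.Adj c w := by
  have : Nonempty V := hG.connected.nonempty
  have hediam : G.ediam ≠ ⊤ := ediam_ne_top_of_diam_ne_zero (by omega)
  have hle (x y : V) : G.dist x y ≤ 2 := hd ▸ dist_le_diam hediam
  obtain ⟨u, v, huv⟩ := G.exists_dist_eq_diam
  have huv' : G.edist u v = 2 := by
    rw [← (hG.connected u v).coe_dist_eq_edist, huv, hd]; rfl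
  obtain ⟨hne_uv, -, c, hc⟩ := edist_eq_two_iff.mp huv'
  rw [mem_commonNeighbors] at hc
  -- A vertex `w` not adjacent to `c` would be at distance 2 from `c`, hence (distances along an
  -- edge of a tree differ by exactly one) adjacent to `u` and `v`: a second `u`-`v` path.
  refine ⟨c, fun w hwc => by_contra fun hcw => ?_⟩
  have hcw2 : G.dist w c = 2 := by
    have h0 : G.dist w c ≠ 0 := (hG.connected.pos_dist_of_ne hwc).ne'
    have h1 : G.dist w c ≠ 1 := fun h => hcw (dist_eq_one_iff_adj.mp h).symm
    have := hle w c
    omega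
  have hadj_w {y : V} (hy : G.Adj y c) : G.Adj w y := by
    have := hle w y
    rcases hG.dist_eq_dist_add_one_of_adj w hy with h | h <;>
      first | omega | exact dist_eq_one_iff_adj.mp (by omega)
  have hu := hadj_w hc.1
  have hv := hadj_w hc.2
  have hp₁ : (Walk.cons hc.1 (Walk.cons hc.2.symm Walk.nil)).IsPath := by
    simp [hne_uv, hc.1.ne, hc.2.ne']
  have hp₂ : (Walk.cons hu.symm (Walk.cons hv Walk.nil)).IsPath := by
    simp [hne_uv, hu.ne', hv.ne]
  have hpaths := (hG.existsUnique_path u v).unique hp₁ hp₂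
  simp only [Walk.cons.injEq] at hpaths
  exact hwc hpaths.1.symm

theorem compPrism_neighborSet_inr {c : V} (hc : ∀ w, w ≠ c → G.Adj c w) :
    (compPrism G).neighborSet (Sum.inr c) = {Sum.inl c} := by
  ext (w | w)
  · change c = w ↔ Sum.inl w = Sum.inl c
    simp [eq_comm]
  · change Gᶜ.Adj c w ↔ Sum.inr w = Sum.inl c
    simpa [compl_adj] using fun hcw => hc w (Ne.symm hcw)

theorem Walk.IsPath.eq_or_eq_of_mem_support {x u v : V}
    (hx : (G.neighborSet x).Subsingleton) {p : G.Walk u v} (hp : p.IsPath)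
    (hxp : x ∈ p.support) : x = u ∨ x = v := by
  induction p with
  | nil => simp_all
  | cons h q ih =>
    rcases List.mem_cons.mp hxp with rfl | hxq
    · exact .inl rfl
    rcases ih hp.of_cons hxq with rfl | rfl
    · cases q with
      | nil => exact .inr rfl
      | cons h' q' =>
        -- the vertices before and after `x` on the path are both neighbours of `x`
        have hud := hx h.symm h'
        exact ((Walk.cons_isPath_iff _ _ |>.mp hp).2 (by simp [hud])).elim
    · exact .inr rfl

theorem isGeoConvex_compl_singleton {x : V} (hx : (G.neighborSet x).Subsingleton) :
    IsGeoConvex G {x}ᶜ := by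
  rintro u hu v hv w ⟨p, hp, -, hw⟩ rfl
  rcases hp.eq_or_eq_of_mem_support hx hw with rfl | rfl
  exacts [hu rfl, hv rfl]

theorem convexityNumber_eq_card_sub_one [Finite V] {x : V} (hx : IsGeoConvex G {x}ᶜ) :
    convexityNumber G = Nat.card V - 1 := by
  have hcompl : ({x}ᶜ : Set V).ncard = Nat.card V - 1 := by
    rw [Set.ncard_compl, Set.ncard_singleton]
  refine IsGreatest.csSup_eq ⟨⟨{x}ᶜ, hx, by simp, hcompl⟩, ?_⟩
  rintro n ⟨S, -, hS, rfl⟩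
  have := Set.ncard_lt_ncard (Set.ssubset_univ_iff.mpr hS) Set.finite_univ
  rw [Set.ncard_univ] at this
  omega

end SimpleGraph

theorem stmt13 {V : Type*} [Fintype V] (T : SimpleGraph V) (hT : T.IsTree)
    (hd : graphDiam T = 2) :
    convexityNumber (compPrism T) = 2 * Nat.card V - 1 := by
  obtain ⟨c, hc⟩ := hT.exists_forall_adj_of_diam_eq_two (graphDiam_eq_diam hT.connected ▸ hd)
  have hpendant : ((compPrism T).neighborSet (Sum.inr c)).Subsingleton := by
    rw [compPrism_neighborSet_inr hc]
    exact Set.subsingleton_singleton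
  rw [convexityNumber_eq_card_sub_one (isGeoConvex_compl_singleton hpendant), Nat.card_sum,
    two_mul]
end

section
/- Let T be a tree and x a vertex of T. Then the set N_T[x], viewed inside the complementary prism TT̄, is geodesically convex in TT̄, and the set of copies { v̄ : v ∈ N_T(x) } induces a clique in T̄. -/
open SimpleGraph

/-!
Any two vertices of `N_T[x]` are at distance at most `2` already inside the copy of `T`, so a
geodesic between two of them has at most one inner vertex. That vertex cannot lie in the copy of
`T̄`, since both its neighbours would then be matched to it, and it cannot be a common neighbour in
`T` of two distinct neighbours of `x` other than `x` itself, since a tree has no `4`-cycle. The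
clique statement is the absence of triangles in a tree.
-/

namespace SimpleGraph

variable {V W : Type*} {G : SimpleGraph V} {G' : SimpleGraph W} {x u v : V}

lemma dist_map_le (f : G →g G') (h : G.Reachable u v) : G'.dist (f u) (f v) ≤ G.dist u v := by
  obtain ⟨p, hp⟩ := h.exists_walk_length_eq_dist
  exact hp ▸ (dist_le (p.map f)).trans_eq (Walk.length_map f p)

lemma reachable_of_mem_insert_neighborSet (hu : u ∈ insert x (G.neighborSet x)) :
    G.Reachable x u := by
  rcases hu with rfl | hu
  · rfl
  · exact Adj.reachable hu

lemma dist_le_one_of_mem_insert_neighborSet (hu : u ∈ insert x (G.neighborSet x)) :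
    G.dist x u ≤ 1 := by
  rcases hu with rfl | hu
  · simp
  · exact (dist_eq_one_iff_adj.2 hu).le

lemma dist_le_two_of_mem_insert_neighborSet (hu : u ∈ insert x (G.neighborSet x))
    (hv : v ∈ insert x (G.neighborSet x)) : G.dist u v ≤ 2 := by
  calc G.dist u v ≤ G.dist u x + G.dist x v :=
        (reachable_of_mem_insert_neighborSet hu).symm.dist_triangle_left v
    _ = G.dist x u + G.dist x v := by rw [dist_comm]
    _ ≤ 2 := by
        have := dist_le_one_of_mem_insert_neighborSet hu
        have := dist_le_one_of_mem_insert_neighborSet hv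
        omega

lemma IsAcyclic.not_adj_of_adj_of_adj (hG : G.IsAcyclic) {a b : V} (ha : G.Adj x a)
    (hb : G.Adj x b) : ¬G.Adj a b := fun h ↦ by
  classical exact hG.cliqueFree le_rfl {x, a, b} (is3Clique_triple_iff.2 ⟨ha, hb, h⟩)

lemma IsAcyclic.eq_of_adj_of_adj (hG : G.IsAcyclic) {a b c : V} (ha : G.Adj x a)
    (hb : G.Adj x b) (hab : a ≠ b) (hac : G.Adj a c) (hcb : G.Adj c b) : c = x := by
  have h := (hG.subsingleton_path a b).elim
    ⟨.cons hac (.cons hcb .nil), by simp [Walk.isPath_def, hac.ne, hcb.ne, hab]⟩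
    ⟨.cons ha.symm (.cons hb .nil), by simp [Walk.isPath_def, ha.ne', hb.ne, hab]⟩
  simpa using congrArg (fun p : G.Path a b ↦ p.1.support) h

lemma IsAcyclic.mem_insert_neighborSet_of_adj_of_adj (hG : G.IsAcyclic) {c : V}
    (hu : u ∈ insert x (G.neighborSet x)) (hv : v ∈ insert x (G.neighborSet x)) (huv : u ≠ v)
    (huc : G.Adj u c) (hcv : G.Adj c v) : c ∈ insert x (G.neighborSet x) := by
  rcases hu with rfl | hu
  · exact Or.inr huc
  rcases hv with rfl | hv
  · exact Or.inr hcv.symm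
  exact hG.eq_of_adj_of_adj hu hv huv huc hcv ▸ Set.mem_insert _ _

lemma isGeoConvex_of_dist_le_two {S : Set V} (hdist : ∀ u ∈ S, ∀ v ∈ S, G.dist u v ≤ 2)
    (hmid : ∀ u ∈ S, ∀ v ∈ S, ∀ w, G.Adj u w → G.Adj w v → G.dist u v = 2 → w ∈ S) :
    IsGeoConvex G S := by
  rintro u hu v hv w ⟨p, -, hlen, hw⟩
  have hp : p.length ≤ 2 := hlen ▸ hdist u hu v hv
  match p, hp, hlen, hw with
  | .nil, _, _, hw =>
    rw [Walk.support_nil, List.mem_singleton] at hw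
    exact hw ▸ hu
  | .cons _ .nil, _, _, hw =>
    simp only [Walk.support_cons, Walk.support_nil, List.mem_cons, List.not_mem_nil,
      or_false] at hw
    rcases hw with rfl | rfl <;> assumption
  | .cons h₁ (.cons h₂ .nil), _, hlen, hw =>
    simp only [Walk.support_cons, Walk.support_nil, List.mem_cons, List.not_mem_nil,
      or_false] at hw
    rcases hw with rfl | rfl | rfl
    · exact hu
    · exact hmid u hu v hv _ h₁ h₂ (by simpa using hlen.symm)
    · exact hv
  | .cons _ (.cons _ (.cons _ _)), hp, _, _ => simp at hp

end SimpleGraph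

namespace compPrism

variable {V : Type*} {G : SimpleGraph V}

def inlHom (G : SimpleGraph V) : G →g compPrism G := ⟨Sum.inl, id⟩

lemma exists_inl_of_adj_inl_of_adj_inl {a b : V} {w : V ⊕ V} (ha : (compPrism G).Adj (.inl a) w)
    (hb : (compPrism G).Adj w (.inl b)) (hab : a ≠ b) :
    ∃ c, w = .inl c ∧ G.Adj a c ∧ G.Adj c b := by
  rcases w with c | c
  · exact ⟨c, rfl, ha, hb⟩
  · exact absurd ((ha : a = c).trans hb) hab

end compPrism

theorem stmt17_general {V : Type*} (T : SimpleGraph V) (hT : T.IsTree) (x : V) :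
    IsGeoConvex (compPrism T) (Sum.inl '' insert x (T.neighborSet x)) ∧
    (∀ a ∈ T.neighborSet x, ∀ b ∈ T.neighborSet x, a ≠ b → Tᶜ.Adj a b) := by
  have hacyc := hT.isAcyclic
  refine ⟨isGeoConvex_of_dist_le_two ?_ ?_,
    fun a ha b hb hab ↦ ⟨hab, hacyc.not_adj_of_adj_of_adj ha hb⟩⟩
  · rintro _ ⟨u, hu, rfl⟩ _ ⟨v, hv, rfl⟩
    have hreach := (reachable_of_mem_insert_neighborSet hu).symm.trans
      (reachable_of_mem_insert_neighborSet hv)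
    exact (dist_map_le (compPrism.inlHom T) hreach).trans
      (dist_le_two_of_mem_insert_neighborSet hu hv)
  · rintro _ ⟨u, hu, rfl⟩ _ ⟨v, hv, rfl⟩ w huw hwv hdist
    have huv : u ≠ v := by
      rintro rfl
      simp at hdist
    obtain ⟨c, rfl, huc, hcv⟩ := compPrism.exists_inl_of_adj_inl_of_adj_inl huw hwv huv
    exact ⟨c, hacyc.mem_insert_neighborSet_of_adj_of_adj hu hv huv huc hcv, rfl⟩

theorem stmt17 {V : Type*} [Fintype V] (T : SimpleGraph V) (hT : T.IsTree) (x : V) :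
    IsGeoConvex (compPrism T) (Sum.inl '' insert x (T.neighborSet x)) ∧
    (∀ a ∈ T.neighborSet x, ∀ b ∈ T.neighborSet x, a ≠ b → Tᶜ.Adj a b) :=
  stmt17_general T hT x
end

section
/- Let T be a tree with diameter 4 and unique central vertex c. If S is a proper convex set of TT̄ containing two vertices u, v of T with d_T(u,v) = 4, then |S| ≤ n(T). -/
/-
Let `u x₁ x₂ x₃ v` be the `u,v`-geodesic of `T`: its midpoint `x₂` is the centre, every vertex is
within distance two of `x₂`, and `u`, `v` are leaves. Let `A`, `B` be the sets of vertices whose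
copies in `T`, resp. `T̄`, lie in `S`. Since `d_T(u,v) ≥ 3`, the path `u ū v̄ v` is a geodesic of
`TT̄`, so `ū, v̄ ∈ S`, and then every `p ∈ A` (non-adjacent to `u` or to `v`) has `p̄ ∈ S`.
If two vertices of `A` are at distance at most two, convexity forces in turn an edge inside `A`,
the centre `x₂ ∈ A`, then `x₁, x₃ ∈ A`; a vertex `z̄ ∉ S` would have to be adjacent to both `x₁`
and `x₃`, i.e. `z = x₂`, so `B = V`, and then `A = V` spreading along the edges: `S` is not proper.
Otherwise, sending each `p ∈ A` to a neighbour is injective on `A` and lands outside `B`, so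
`|S| = |A| + |B| ≤ n(T)`.
-/

open SimpleGraph

namespace SimpleGraph

variable {W : Type*} {G : SimpleGraph W} {a b c x y y' z : W}

lemma ne_of_two_le_dist (h : 2 ≤ G.dist a b) : a ≠ b := by
  rintro rfl
  simp at h

lemma not_adj_of_two_le_dist (h : 2 ≤ G.dist a b) : ¬G.Adj a b := by
  intro hab
  rw [dist_eq_one_iff_adj.mpr hab] at h
  omega

lemma not_adj_of_adj_of_three_le_dist (h : 3 ≤ G.dist a b) (hax : G.Adj a x) : ¬G.Adj x b :=
  fun hxb => by simpa using (dist_le (.cons hax (.cons hxb .nil))).trans_lt' h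

lemma IsTree.eq_of_adj_of_dist_add_one (hT : G.IsTree) (hy : G.Adj x y) (hy' : G.Adj x y')
    (h : G.dist c y + 1 = G.dist c x) (h' : G.dist c y' + 1 = G.dist c x) : y = y' := by
  classical
  obtain ⟨q, hq, -⟩ := hT.connected.exists_path_of_dist c x
  have mem_support {y} (hy : G.Adj x y) (h : G.dist c y + 1 = G.dist c x) : y ∈ q.support := by
    by_contra hyq
    obtain ⟨p, hp, hpl⟩ := hT.connected.exists_path_of_dist c y
    have hxp := hT.isAcyclic.mem_support_of_ne_mem_support_of_adj_of_isPath hp hq hy.symm hyq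
    have := (dist_le (p.takeUntil x hxp)).trans (p.length_takeUntil_le_length hxp)
    omega
  rw [hT.isAcyclic.eq_penultimate_of_adj_end hq hy (mem_support hy h),
    hT.isAcyclic.eq_penultimate_of_adj_end hq hy' (mem_support hy' h')]

lemma IsTree.dist_eq_dist_add_length (hT : G.IsTree) (p : G.Walk x z) (hp : p.IsPath)
    (hsnd : ∀ y, G.Adj x y → G.dist c y + 1 = G.dist c x → y ≠ p.snd) :
    G.dist c z = G.dist c x + p.length := by
  induction p with
  | nil => rfl
  | @cons x x' z hxx' q ih =>
    rw [Walk.cons_isPath_iff] at hp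
    have hfar : G.dist c x' = G.dist c x + 1 := by
      have hnear : G.dist c x' + 1 ≠ G.dist c x := fun h => hsnd x' hxx' h (Walk.snd_cons ..).symm
      have := hT.dist_eq_dist_add_one_of_adj c hxx'
      omega
    rw [ih hp.1 fun y hy hyc => ?_, hfar, Walk.length_cons]
    · omega
    · rw [hT.eq_of_adj_of_dist_add_one hy hxx'.symm hyc hfar.symm]
      exact fun hxq => hp.2 (hxq ▸ q.getVert_mem_support 1)

end SimpleGraph

lemma dist_le_graphDiam {W : Type*} {G : SimpleGraph W} (h : graphDiam G ≠ 0) (a b : W) :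
    G.dist a b ≤ graphDiam G := by
  have hbdd : BddAbove {d | ∃ u v : W, G.dist u v = d} := by
    by_contra hn
    exact h (Nat.sSup_of_not_bddAbove hn)
  exact le_csSup hbdd ⟨a, b, rfl⟩

namespace IsGeoConvex

variable {W : Type*} {G : SimpleGraph W} {S : Set W} {a b x y : W}

lemma mem_of_length_eq_dist (hS : IsGeoConvex G S) (ha : a ∈ S)
    (hb : b ∈ S) (p : G.Walk a b) (hp : p.length = G.dist a b) (hx : x ∈ p.support) : x ∈ S :=
  hS a ha b hb x ⟨p, p.isPath_of_length_eq_dist hp, hp, hx⟩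

lemma mem_of_adj_of_adj_s19 (hS : IsGeoConvex G S) (ha : a ∈ S) (hb : b ∈ S)
    (hab : a ≠ b) (hnadj : ¬G.Adj a b) (hax : G.Adj a x) (hxb : G.Adj x b) : x ∈ S := by
  let p : G.Walk a b := .cons hax (.cons hxb .nil)
  have hlt := p.reachable.one_lt_dist_of_ne_of_not_adj hab hnadj
  have hle : G.dist a b ≤ 2 := dist_le p
  exact hS.mem_of_length_eq_dist ha hb p (by change 2 = _; omega) (by simp [p])

lemma mem_of_adj_of_adj_of_adj (hS : IsGeoConvex G S) (ha : a ∈ S)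
    (hb : b ∈ S) (hab : a ≠ b) (hnadj : ¬G.Adj a b) (hno : ∀ x, G.Adj a x → ¬G.Adj x b)
    (hax : G.Adj a x) (hxy : G.Adj x y) (hyb : G.Adj y b) : x ∈ S ∧ y ∈ S := by
  let p : G.Walk a b := .cons hax (.cons hxy (.cons hyb .nil))
  have hlt : 2 < G.dist a b := by
    have := two_lt_edist_iff.mpr ⟨hab, hnadj, Set.eq_empty_iff_forall_notMem.mpr
      fun x hx => hno x hx.1 hx.2.symm⟩
    rw [← p.reachable.coe_dist_eq_edist] at this
    exact_mod_cast this
  have hle : G.dist a b ≤ 3 := dist_le p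
  have hp : p.length = G.dist a b := by change 3 = _; omega
  exact ⟨hS.mem_of_length_eq_dist ha hb p hp (by simp [p]),
    hS.mem_of_length_eq_dist ha hb p hp (by simp [p])⟩

end IsGeoConvex

section ComplementaryPrism

variable {V : Type*} {T : SimpleGraph V} {S : Set (V ⊕ V)} {p q m z : V}

@[simp] lemma compPrism_adj_inl_inl_s19 : (compPrism T).Adj (.inl p) (.inl q) ↔ T.Adj p q := Iff.rfl

@[simp] lemma compPrism_adj_inr_inr :
    (compPrism T).Adj (.inr p) (.inr q) ↔ p ≠ q ∧ ¬T.Adj p q := compl_adj T p q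

@[simp] lemma compPrism_adj_inl_inr_s19 : (compPrism T).Adj (.inl p) (.inr q) ↔ p = q := Iff.rfl

@[simp] lemma compPrism_adj_inr_inl : (compPrism T).Adj (.inr p) (.inl q) ↔ p = q := Iff.rfl

namespace IsGeoConvex

lemma inl_mem_of_adj_s19 (hS : IsGeoConvex (compPrism T) S) (hp : .inl p ∈ S) (hq : .inr q ∈ S)
    (hpq : T.Adj p q) : .inl q ∈ S :=
  hS.mem_of_adj_of_adj_s19 hp hq (by simp) (by simpa using hpq.ne) hpq rfl

lemma inr_mem_of_two_le_dist (hS : IsGeoConvex (compPrism T) S) (hp : .inl p ∈ S)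
    (hq : .inr q ∈ S) (hpq : 2 ≤ T.dist p q) : .inr p ∈ S :=
  hS.mem_of_adj_of_adj_s19 hp hq (by simp) (by simpa using ne_of_two_le_dist hpq) rfl
    (compPrism_adj_inr_inr.mpr ⟨ne_of_two_le_dist hpq, not_adj_of_two_le_dist hpq⟩)

lemma inl_mem_of_two_le_dist (hS : IsGeoConvex (compPrism T) S) (hp : .inl p ∈ S)
    (hq : .inl q ∈ S) (hpq : 2 ≤ T.dist p q) (hpm : T.Adj p m) (hmq : T.Adj m q) : .inl m ∈ S :=
  hS.mem_of_adj_of_adj_s19 hp hq (by simpa using ne_of_two_le_dist hpq)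
    (by simpa using not_adj_of_two_le_dist hpq) hpm hmq

lemma inr_mem_of_adj_s19 (hS : IsGeoConvex (compPrism T) S) (hp : .inr p ∈ S) (hq : .inr q ∈ S)
    (hpq : T.Adj p q) (hzp : z ≠ p) (hzq : z ≠ q) (hzp' : ¬T.Adj z p) (hzq' : ¬T.Adj z q) :
    .inr z ∈ S :=
  hS.mem_of_adj_of_adj_s19 hp hq (by simpa using hpq.ne) (by simp [hpq])
    (compPrism_adj_inr_inr.mpr ⟨hzp.symm, fun h => hzp' h.symm⟩)
    (compPrism_adj_inr_inr.mpr ⟨hzq, hzq'⟩)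

lemma mem_of_three_le_dist (hS : IsGeoConvex (compPrism T) S) (hp : .inl p ∈ S)
    (hq : .inl q ∈ S) (hpq : 3 ≤ T.dist p q) {x y : V ⊕ V} (hpx : (compPrism T).Adj (.inl p) x)
    (hxy : (compPrism T).Adj x y) (hyq : (compPrism T).Adj y (.inl q)) : x ∈ S ∧ y ∈ S := by
  have hne := ne_of_two_le_dist (by omega : 2 ≤ T.dist p q)
  refine hS.mem_of_adj_of_adj_of_adj hp hq (by simpa using hne)
    (by simpa using not_adj_of_two_le_dist (by omega : 2 ≤ T.dist p q)) ?_ hpx hxy hyq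
  rintro (m | m) hpm hmq
  · exact not_adj_of_adj_of_three_le_dist hpq hpm hmq
  · simp only [compPrism_adj_inl_inr_s19, compPrism_adj_inr_inl] at hpm hmq
    exact hne (hpm.trans hmq)

lemma inr_mem_of_inl_mem (hS : IsGeoConvex (compPrism T) S) (hT : T.Connected) {u v : V}
    (hu : .inr u ∈ S) (hv : .inr v ∈ S) (huv : 3 ≤ T.dist u v) (hp : .inl p ∈ S) : .inr p ∈ S := by
  have := hT.dist_triangle (u := u) (v := p) (w := v)
  have := T.dist_comm (u := u) (v := p)
  obtain h | h : 2 ≤ T.dist p u ∨ 2 ≤ T.dist p v := by omega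
  exacts [hS.inr_mem_of_two_le_dist hp hu h, hS.inr_mem_of_two_le_dist hp hv h]

lemma adj_of_inr_notMem (hS : IsGeoConvex (compPrism T) S) {l : V} (hl : .inr l ∈ S)
    (hm : .inr m ∈ S) (hlm : T.Adj l m) (hleaf : ∀ y, T.Adj l y → y = m) (hz : .inr z ∉ S) :
    T.Adj z m := by
  by_contra hzm
  have hzl : z ≠ l := by rintro rfl; exact hz hl
  have hzm' : z ≠ m := by rintro rfl; exact hz hm
  exact hz (hS.inr_mem_of_adj_s19 hl hm hlm hzl hzm' (fun h => hzm' (hleaf z h.symm)) hzm)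

lemma inl_mem_of_reachable (hS : IsGeoConvex (compPrism T) S) (hB : ∀ z, .inr z ∈ S)
    (hp : .inl p ∈ S) (hpq : T.Reachable p q) : .inl q ∈ S := by
  obtain ⟨w⟩ := hpq
  induction w with
  | nil => exact hp
  | cons h _ ih => exact ih (hS.inl_mem_of_adj_s19 hp (hB _) h)

lemma exists_adj_inl_mem (hS : IsGeoConvex (compPrism T) S) (hT : T.Connected)
    (hp : .inl p ∈ S) (hq : .inl q ∈ S) (hpq : p ≠ q) (hd : T.dist p q ≤ 2) :
    ∃ w x, .inl w ∈ S ∧ .inl x ∈ S ∧ T.Adj w x := by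
  have hpos := hT.pos_dist_of_ne hpq
  obtain h | h : T.dist p q = 1 ∨ T.dist p q = 2 := by omega
  · exact ⟨p, q, hp, hq, dist_eq_one_iff_adj.mp h⟩
  · have hedist : T.edist p q = 2 := by rw [← (hT p q).coe_dist_eq_edist, h]; rfl
    obtain ⟨m, hpm, hqm⟩ := (edist_eq_two_iff.mp hedist).2.2
    exact ⟨p, m, hp, hS.inl_mem_of_two_le_dist hp hq h.ge hpm hqm.symm, hpm⟩

lemma ncard_le_of_three_le_dist [Finite V] (hS : IsGeoConvex (compPrism T) S)
    (hT : ∀ p, ∃ q, T.Adj p q)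
    (hA : ∀ p q, .inl p ∈ S → .inl q ∈ S → p ≠ q → 3 ≤ T.dist p q) :
    S.ncard ≤ Nat.card V := by
  choose f hf using hT
  set A := Sum.inl ⁻¹' S
  set B := Sum.inr ⁻¹' S
  have hcard : S.ncard = A.ncard + B.ncard := by
    conv_lhs => rw [← Set.image_preimage_inl_union_image_preimage_inr S]
    rw [Set.ncard_union_eq Set.disjoint_image_inl_image_inr,
      Set.ncard_image_of_injective _ Sum.inl_injective,
      Set.ncard_image_of_injective _ Sum.inr_injective]
  have hfB : ∀ p ∈ A, f p ∈ Bᶜ := fun p hp hfp => by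
    have := hA p (f p) hp (hS.inl_mem_of_adj_s19 hp hfp (hf p)) (hf p).ne
    exact not_adj_of_two_le_dist (by omega) (hf p)
  have hinj : Set.InjOn f A := fun p hp q hq hpq => by
    by_contra hne
    exact not_adj_of_adj_of_three_le_dist (hA p q hp hq hne) (hf p) (hpq ▸ (hf q).symm)
  have := Set.ncard_le_ncard_of_injOn f hfB hinj
  have := Set.ncard_add_ncard_compl B
  omega

end IsGeoConvex
end ComplementaryPrism

section DiameterFour

variable {V : Type*} {T : SimpleGraph V} {S : Set (V ⊕ V)} {u x₁ x₂ x₃ v w x y z : V}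

/-- The midpoint `x₂` is the central vertex `c` of the tree. -/
structure DiameterFourPath (T : SimpleGraph V) (u x₁ x₂ x₃ v : V) : Prop where
  isTree : T.IsTree
  dist_le_four : ∀ a b, T.dist a b ≤ 4
  adj₁ : T.Adj u x₁
  adj₂ : T.Adj x₁ x₂
  adj₃ : T.Adj x₂ x₃
  adj₄ : T.Adj x₃ v
  dist_eq_four : T.dist u v = 4

lemma SimpleGraph.IsTree.exists_diameterFourPath (hT : T.IsTree)
    (hdiam : ∀ a b, T.dist a b ≤ 4) (huv : T.dist u v = 4) :
    ∃ x₁ x₂ x₃, DiameterFourPath T u x₁ x₂ x₃ v := by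
  obtain ⟨p, hp⟩ := hT.connected.exists_walk_length_eq_dist u v
  rcases p with _ | ⟨h₁, _ | ⟨h₂, _ | ⟨h₃, _ | ⟨h₄, _ | ⟨h₅, p⟩⟩⟩⟩⟩ <;>
    simp only [Walk.length_cons, Walk.length_nil] at hp <;> try omega
  exact ⟨_, _, _, hT, hdiam, h₁, h₂, h₃, h₄, huv⟩

namespace DiameterFourPath

lemma symm (hP : DiameterFourPath T u x₁ x₂ x₃ v) : DiameterFourPath T v x₃ x₂ x₁ u :=
  ⟨hP.isTree, hP.dist_le_four, hP.adj₄.symm, hP.adj₃.symm, hP.adj₂.symm, hP.adj₁.symm,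
    T.dist_comm ▸ hP.dist_eq_four⟩

lemma dist_left_center (hP : DiameterFourPath T u x₁ x₂ x₃ v) : T.dist u x₂ = 2 := by
  have h₁ := dist_le (.cons hP.adj₁ (.cons hP.adj₂ .nil))
  have h₂ := dist_le (.cons hP.adj₃ (.cons hP.adj₄ .nil))
  have := hP.isTree.connected.dist_triangle (u := u) (v := x₂) (w := v)
  simp only [Walk.length_cons, Walk.length_nil] at h₁ h₂
  have := hP.dist_eq_four
  omega

lemma dist_left_x₃ (hP : DiameterFourPath T u x₁ x₂ x₃ v) : T.dist u x₃ = 3 := by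
  have h₁ := dist_le (.cons hP.adj₁ (.cons hP.adj₂ (.cons hP.adj₃ .nil)))
  have := hP.isTree.connected.dist_triangle (u := u) (v := x₃) (w := v)
  simp only [Walk.length_cons, Walk.length_nil] at h₁
  rw [dist_eq_one_iff_adj.mpr hP.adj₄, hP.dist_eq_four] at this
  omega

lemma dist_x₁_x₃ (hP : DiameterFourPath T u x₁ x₂ x₃ v) : T.dist x₁ x₃ = 2 := by
  have h₁ := dist_le (.cons hP.adj₂ (.cons hP.adj₃ .nil))
  have := hP.isTree.connected.dist_triangle (u := u) (v := x₁) (w := x₃)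
  simp only [Walk.length_cons, Walk.length_nil] at h₁
  rw [dist_eq_one_iff_adj.mpr hP.adj₁, hP.dist_left_x₃] at this
  omega

lemma eq_of_adj_center (hP : DiameterFourPath T u x₁ x₂ x₃ v) (hy : T.Adj x₂ y)
    (h : T.dist u y + 1 = T.dist u x₂) : y = x₁ :=
  hP.isTree.eq_of_adj_of_dist_add_one hy hP.adj₂.symm h
    (by rw [hP.dist_left_center, dist_eq_one_iff_adj.mpr hP.adj₁])

lemma dist_eq_three_of_adj_center (hP : DiameterFourPath T u x₁ x₂ x₃ v) (hy : T.Adj x₂ y)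
    (hne : y ≠ x₁) : T.dist u y = 3 := by
  have := hP.isTree.dist_eq_dist_add_one_of_adj u hy
  have := mt (hP.eq_of_adj_center hy) hne
  rw [hP.dist_left_center] at *
  omega

lemma dist_center_le_two_of_snd_ne (hP : DiameterFourPath T u x₁ x₂ x₃ v) (p : T.Walk x₂ z)
    (hp : p.IsPath) (hpl : p.length = T.dist x₂ z) (hsnd : p.snd ≠ x₁) : T.dist x₂ z ≤ 2 := by
  have hfar := hP.isTree.dist_eq_dist_add_length p hp
    fun y hy h => hP.eq_of_adj_center hy h ▸ hsnd.symm
  have := hP.dist_le_four u z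
  rw [hP.dist_left_center] at hfar
  omega

lemma dist_center_le_two (hP : DiameterFourPath T u x₁ x₂ x₃ v) (z : V) : T.dist x₂ z ≤ 2 := by
  obtain ⟨p, hp, hpl⟩ := hP.isTree.connected.exists_path_of_dist x₂ z
  by_cases hsnd : p.snd = x₁
  · have hne : x₁ ≠ x₃ := ne_of_two_le_dist hP.dist_x₁_x₃.ge
    exact hP.symm.dist_center_le_two_of_snd_ne p hp hpl (hsnd ▸ hne)
  · exact hP.dist_center_le_two_of_snd_ne p hp hpl hsnd

lemma eq_of_adj_left (hP : DiameterFourPath T u x₁ x₂ x₃ v) (hy : T.Adj u y) : y = x₁ := by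
  have := hP.isTree.dist_eq_dist_add_one_of_adj x₂ hy
  have := hP.dist_center_le_two y
  have hu : T.dist x₂ u = 2 := T.dist_comm ▸ hP.dist_left_center
  refine hP.isTree.eq_of_adj_of_dist_add_one (c := x₂) hy hP.adj₁ (by omega) ?_
  rw [hu, T.dist_comm, dist_eq_one_iff_adj.mpr hP.adj₂]

lemma eq_center_of_adj_of_adj (hP : DiameterFourPath T u x₁ x₂ x₃ v) (h₁ : T.Adj x₁ z)
    (h₃ : T.Adj z x₃) : z = x₂ :=
  hP.isTree.eq_of_adj_of_dist_add_one h₁ hP.adj₂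
    (by rw [T.dist_comm, dist_eq_one_iff_adj.mpr h₃, T.dist_comm, hP.dist_x₁_x₃])
    (by rw [T.dist_comm, dist_eq_one_iff_adj.mpr hP.adj₃, T.dist_comm, hP.dist_x₁_x₃])

lemma inl_center_mem_of_adj_center (hP : DiameterFourPath T u x₁ x₂ x₃ v)
    (hS : IsGeoConvex (compPrism T) S) (hu : .inl u ∈ S) (hy : .inl y ∈ S) (hadj : T.Adj x₂ y)
    (hne : y ≠ x₁) : .inl x₂ ∈ S :=
  (hS.mem_of_three_le_dist hu hy (hP.dist_eq_three_of_adj_center hadj hne).ge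
    (x := .inl x₁) (y := .inl x₂) hP.adj₁ hP.adj₂ hadj).2

lemma inl_center_mem (hP : DiameterFourPath T u x₁ x₂ x₃ v) (hS : IsGeoConvex (compPrism T) S)
    (hu : .inl u ∈ S) (hv : .inl v ∈ S) (hw : .inl w ∈ S) (hx : .inl x ∈ S) (hwx : T.Adj w x) :
    .inl x₂ ∈ S := by
  have hnear : ∀ y, .inl y ∈ S → T.dist x₂ y ≤ 1 → .inl x₂ ∈ S := by
    intro y hy hd
    obtain rfl | hne := eq_or_ne y x₂
    · exact hy
    have hadj : T.Adj x₂ y :=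
      dist_eq_one_iff_adj.mp (by have := hP.isTree.connected.pos_dist_of_ne hne.symm; omega)
    obtain rfl | hne₁ := eq_or_ne y x₁
    · exact hP.symm.inl_center_mem_of_adj_center hS hv hy hadj
        (ne_of_two_le_dist hP.dist_x₁_x₃.ge)
    · exact hP.inl_center_mem_of_adj_center hS hu hy hadj hne₁
  have := hP.dist_center_le_two w
  have := hP.dist_center_le_two x
  rcases hP.isTree.dist_eq_dist_add_one_of_adj x₂ hwx with h | h
  · exact hnear x hx (by omega)
  · exact hnear w hw (by omega)

lemma forall_inr_mem (hP : DiameterFourPath T u x₁ x₂ x₃ v) (hS : IsGeoConvex (compPrism T) S)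
    (hu : .inl u ∈ S) (hv : .inl v ∈ S) (hc : .inl x₂ ∈ S) (z : V) : .inr z ∈ S := by
  have huv : 3 ≤ T.dist u v := by rw [hP.dist_eq_four]; omega
  obtain ⟨hu', hv'⟩ := hS.mem_of_three_le_dist hu hv huv (x := .inr u) (y := .inr v) rfl
    (compPrism_adj_inr_inr.mpr ⟨ne_of_two_le_dist (G := T) (by omega),
      not_adj_of_two_le_dist (by omega)⟩) rfl
  have hAB {p} := hS.inr_mem_of_inl_mem hP.isTree.connected hu' hv' huv (p := p)
  have h₁ := hS.inl_mem_of_two_le_dist hu hc hP.dist_left_center.ge hP.adj₁ hP.adj₂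
  have h₃ := hS.inl_mem_of_two_le_dist hv hc hP.symm.dist_left_center.ge hP.adj₄.symm
    hP.adj₃.symm
  by_contra hz
  have hz₁ := hS.adj_of_inr_notMem hu' (hAB h₁) hP.adj₁ (fun _ => hP.eq_of_adj_left) hz
  have hz₃ := hS.adj_of_inr_notMem hv' (hAB h₃) hP.adj₄.symm (fun _ => hP.symm.eq_of_adj_left) hz
  exact hz (hP.eq_center_of_adj_of_adj hz₁.symm hz₃ ▸ hAB hc)

lemma eq_univ_of_dist_le_two (hP : DiameterFourPath T u x₁ x₂ x₃ v)
    (hS : IsGeoConvex (compPrism T) S) (hu : .inl u ∈ S) (hv : .inl v ∈ S) {p q : V}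
    (hp : .inl p ∈ S) (hq : .inl q ∈ S) (hpq : p ≠ q) (hd : T.dist p q ≤ 2) : S = Set.univ := by
  obtain ⟨w, x, hw, hx, hwx⟩ := hS.exists_adj_inl_mem hP.isTree.connected hp hq hpq hd
  have hB := hP.forall_inr_mem hS hu hv (hP.inl_center_mem hS hu hv hw hx hwx)
  ext (z | z)
  · simpa using hS.inl_mem_of_reachable hB hu (hP.isTree.connected u z)
  · simpa using hB z

end DiameterFourPath
end DiameterFour

theorem stmt19 {V : Type*} [Fintype V] (T : SimpleGraph V) (hT : T.IsTree)
    (hd : graphDiam T = 4) (S : Set (V ⊕ V))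
    (hS : IsGeoConvex (compPrism T) S) (hSp : S ≠ Set.univ)
    (u v : V) (hu : Sum.inl u ∈ S) (hv : Sum.inl v ∈ S) (huv : T.dist u v = 4) :
    S.ncard ≤ Nat.card V := by
  have hdiam : ∀ a b, T.dist a b ≤ 4 := hd ▸ dist_le_graphDiam (by omega)
  obtain ⟨x₁, x₂, x₃, hP⟩ := hT.exists_diameterFourPath hdiam huv
  by_cases hsep : ∀ p q, .inl p ∈ S → .inl q ∈ S → p ≠ q → 3 ≤ T.dist p q
  · have := hP.adj₁.nontrivial
    exact hS.ncard_le_of_three_le_dist hT.connected.preconnected.exists_adj_of_nontrivial hsep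
  · push Not at hsep
    obtain ⟨p, q, hp, hq, hpq, hd⟩ := hsep
    exact absurd (hP.eq_univ_of_dist_le_two hS hu hv hp hq hpq (by omega)) hSp
end
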